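/- Let L be a Lie algebra over a field of characteristic zero and let V ∈ L be an element whose adjoint map ad_V is nilpotent. Then for all Y, Λ ∈ L one has Σ_{k≥0} (1/(k+1)!) Σ_{l=0}^{k} (ad_V)^l ⁅Y, (ad_V)^{k−l} Λ⁆ = ⁅ Σ_{m≥0} (1/(m+1)!) (ad_V)^m Y , Σ_{n≥0} (1/n!) (ad_V)^n Λ ⁆, where all sums are finite because ad_V is nilpotent. -/

import Mathlib

/-!
By the Leibniz rule for `ad_V`, the `k`-th term on the left is
`(k+1)!⁻¹ Σ_{l ≤ k} Σ_{i ≤ l} C(l,i) ⁅ad_V^i Y, ad_V^(k-i) Λ⁆`, and the hockey-stick identity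
`Σ_{l=i}^{k} C(l,i) = C(k+1,i+1)` turns it into `Σ_{i+j=k} ((i+1)! j!)⁻¹ ⁅ad_V^i Y, ad_V^j Λ⁆`,
the `k`-th term of the Cauchy product of the two series on the right. Nilpotency of `ad_V` makes
all series finite, so the Cauchy product of the bracket is legitimate.
-/

open Finset

theorem finsum_eq_sum_range_of_eq_zero {M : Type*} [AddCommMonoid M] {f : ℕ → M} {N : ℕ}
    (hf : ∀ n, N ≤ n → f n = 0) : ∑ᶠ n, f n = ∑ n ∈ range N, f n := by
  refine finsum_eq_sum_of_support_subset f fun n hn => ?_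
  by_contra h
  exact hn (hf n (by simpa using h))

theorem sum_range_sum_antidiagonal_eq_sum_product {M : Type*} [AddCommMonoid M]
    {g : ℕ × ℕ → M} {N : ℕ} (hg : ∀ p ∉ range N ×ˢ range N, g p = 0) :
    ∑ k ∈ range (2 * N), ∑ p ∈ antidiagonal k, g p = ∑ p ∈ range N ×ˢ range N, g p := by
  rw [← sum_fiberwise_of_maps_to (g := fun p : ℕ × ℕ => p.1 + p.2) (t := range (2 * N))]
  · refine sum_congr rfl fun k _ => (sum_subset (fun p hp => ?_) fun p hp hp' => ?_).symm
    · simp_all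
    · exact hg p fun h => hp' (by simp_all)
  · intro p hp
    simp only [mem_product, mem_range] at hp ⊢
    omega

theorem finsum_sum_antidiagonal_eq_sum_product {M : Type*} [AddCommMonoid M]
    {g : ℕ × ℕ → M} {N : ℕ} (hg : ∀ p ∉ range N ×ˢ range N, g p = 0) :
    ∑ᶠ k, ∑ p ∈ antidiagonal k, g p = ∑ p ∈ range N ×ˢ range N, g p := by
  rw [finsum_eq_sum_range_of_eq_zero (N := 2 * N), sum_range_sum_antidiagonal_eq_sum_product hg]
  intro k hk
  refine sum_eq_zero fun p hp => hg p ?_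
  simp only [HasAntidiagonal.mem_antidiagonal] at hp
  simp only [mem_product, mem_range]
  omega

theorem lie_finsum_finsum {L : Type*} [LieRing L] {a b : ℕ → L} {N : ℕ}
    (ha : ∀ n, N ≤ n → a n = 0) (hb : ∀ n, N ≤ n → b n = 0) :
    ⁅∑ᶠ m, a m, ∑ᶠ n, b n⁆ = ∑ᶠ k, ∑ p ∈ antidiagonal k, ⁅a p.1, b p.2⁆ := by
  rw [finsum_eq_sum_range_of_eq_zero ha, finsum_eq_sum_range_of_eq_zero hb, sum_lie_sum,
    finsum_sum_antidiagonal_eq_sum_product (N := N), sum_product]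
  intro p hp
  simp only [mem_product, mem_range, not_and_or, not_lt] at hp
  rcases hp with h | h <;> simp [ha _ h, hb _ h]

theorem sum_range_sum_range_choose_smul {M : Type*} [AddCommMonoid M] (x : ℕ → M) (k : ℕ) :
    ∑ l ∈ range (k + 1), ∑ i ∈ range (l + 1), l.choose i • x i
      = ∑ i ∈ range (k + 1), (k + 1).choose (i + 1) • x i := by
  rw [sum_comm' (t' := range (k + 1)) (s' := fun i => Icc i k)]
  · simp only [← sum_smul, Nat.sum_Icc_choose]
  · intro l i
    simp only [mem_range, mem_Icc]
    omega

theorem ad_pow_lie_ad_pow_sub {R L : Type*} [CommRing R] [LieRing L] [LieAlgebra R L]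
    (x y z : L) {k l : ℕ} (hl : l ≤ k) :
    ((LieAlgebra.ad R L x) ^ l) ⁅y, ((LieAlgebra.ad R L x) ^ (k - l)) z⁆
      = ∑ i ∈ range (l + 1),
          l.choose i • ⁅((LieAlgebra.ad R L x) ^ i) y, ((LieAlgebra.ad R L x) ^ (k - i)) z⁆ := by
  rw [LieAlgebra.ad_pow_lie, Nat.sum_antidiagonal_eq_sum_range_succ
    (fun i j => l.choose i • ⁅((LieAlgebra.ad R L x) ^ i) y,
      ((LieAlgebra.ad R L x) ^ j) (((LieAlgebra.ad R L x) ^ (k - l)) z)⁆)]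
  refine sum_congr rfl fun i hi => ?_
  have hexp : l - i + (k - l) = k - i := by have := mem_range.1 hi; omega
  rw [← Module.End.mul_apply, ← pow_add, hexp]

theorem inv_factorial_smul_sum_ad_pow_lie {K L : Type*} [Field K] [CharZero K] [LieRing L]
    [LieAlgebra K L] (x y z : L) (k : ℕ) :
    ((k + 1).factorial : K)⁻¹ • ∑ l ∈ range (k + 1),
        ((LieAlgebra.ad K L x) ^ l) ⁅y, ((LieAlgebra.ad K L x) ^ (k - l)) z⁆
      = ∑ p ∈ antidiagonal k, ⁅((p.1 + 1).factorial : K)⁻¹ • ((LieAlgebra.ad K L x) ^ p.1) y,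
          (p.2.factorial : K)⁻¹ • ((LieAlgebra.ad K L x) ^ p.2) z⁆ := by
  rw [sum_congr rfl fun l hl => ad_pow_lie_ad_pow_sub x y z (Nat.lt_succ_iff.1 (mem_range.1 hl)),
    sum_range_sum_range_choose_smul, Nat.sum_antidiagonal_eq_sum_range_succ_mk, smul_sum]
  refine sum_congr rfl fun i hi => ?_
  have hik : i ≤ k := Nat.lt_succ_iff.1 (mem_range.1 hi)
  rw [smul_lie, lie_smul, smul_smul, ← Nat.cast_smul_eq_nsmul K, smul_smul,
    Nat.cast_choose K (Nat.succ_le_succ hik), Nat.succ_sub_succ]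
  congr 1
  have hfact : ((k + 1).factorial : K) ≠ 0 := Nat.cast_ne_zero.2 (Nat.factorial_ne_zero _)
  field_simp

theorem stmt_2 {K : Type*} [Field K] [CharZero K] {L : Type*} [LieRing L] [LieAlgebra K L]
    (V : L) (hV : ∃ N : ℕ, (LieAlgebra.ad K L V) ^ N = 0) (Y Λ : L) :
    (∑ᶠ k : ℕ, (((k + 1).factorial : K)⁻¹ •
        ∑ l ∈ Finset.range (k + 1),
          ((LieAlgebra.ad K L V) ^ l) ⁅Y, ((LieAlgebra.ad K L V) ^ (k - l)) Λ⁆))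
      = ⁅∑ᶠ m : ℕ, (((m + 1).factorial : K)⁻¹ • ((LieAlgebra.ad K L V) ^ m) Y),
         ∑ᶠ n : ℕ, ((n.factorial : K)⁻¹ • ((LieAlgebra.ad K L V) ^ n) Λ)⁆ := by
  obtain ⟨N, hN⟩ := hV
  have hvanish : ∀ n, N ≤ n → (LieAlgebra.ad K L V) ^ n = 0 :=
    fun n hn => pow_eq_zero_of_le hn hN
  rw [lie_finsum_finsum (N := N) (fun m hm => by simp [hvanish m hm])
    (fun n hn => by simp [hvanish n hn])]
  exact finsum_congr fun k => inv_factorial_smul_sum_ad_pow_lie V Y Λ k
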